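/- For any worms A and B in worm normal form with all modalities ≥ α, either GLP_Λ proves ⟨α⟩A → ⟨α⟩B or GLP_Λ proves ⟨α⟩B → ⟨α⟩A. -/

import Mathlib

inductive Formula (L : Type) : Type where
  | bot : Formula L
  | var : Nat → Formula L
  | imp : Formula L → Formula L → Formula L
  | box : L → Formula L → Formula L

namespace Formula

variable {L : Type}

def neg (φ : Formula L) : Formula L := imp φ bot
def top : Formula L := neg bot
def and (φ ψ : Formula L) : Formula L := neg (imp φ ψ.neg)
def or (φ ψ : Formula L) : Formula L := imp φ.neg ψ
def iff (φ ψ : Formula L) : Formula L := (imp φ ψ).and (imp ψ φ)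
def dia (α : L) (φ : Formula L) : Formula L := neg (box α φ.neg)

end Formula

open Formula

/-- Provability in the polymodal provability logic `GLP_Λ` over a linear order. -/
inductive GLP {L : Type} [LinearOrder L] : Formula L → Prop where
  | k1 : ∀ φ ψ : Formula L, GLP (φ.imp (ψ.imp φ))
  | k2 : ∀ φ ψ χ : Formula L, GLP ((φ.imp (ψ.imp χ)).imp ((φ.imp ψ).imp (φ.imp χ)))
  | k3 : ∀ φ ψ : Formula L, GLP ((φ.neg.imp ψ.neg).imp (ψ.imp φ))
  | dist : ∀ (α : L) (φ ψ : Formula L), GLP ((Formula.box α (φ.imp ψ)).imp ((Formula.box α φ).imp (Formula.box α ψ)))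
  | lob : ∀ (α : L) (φ : Formula L), GLP ((Formula.box α ((Formula.box α φ).imp φ)).imp (Formula.box α φ))
  | trans : ∀ (α β : L) (φ : Formula L), α ≤ β → GLP ((Formula.box α φ).imp (Formula.box β (Formula.box α φ)))
  | negintro : ∀ (α β : L) (φ : Formula L), α < β → GLP ((dia α φ).imp (Formula.box β (dia α φ)))
  | mono : ∀ (α β : L) (φ : Formula L), α ≤ β → GLP ((Formula.box α φ).imp (Formula.box β φ))
  | mp : ∀ φ ψ : Formula L, GLP (φ.imp ψ) → GLP φ → GLP ψ
  | nec : ∀ (α : L) (φ : Formula L), GLP φ → GLP (Formula.box α φ)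

/-- The worm (iterated consistency statement) associated to a list of modalities. -/
def worm {L : Type} : List L → Formula L
  | [] => Formula.top
  | α :: w => Formula.dia α (worm w)

/-- `Lt α A B` iff `GLP ⊢ B → ⟨α⟩A`. -/
def Lt {L : Type} [LinearOrder L] (α : L) (A B : List L) : Prop :=
  GLP ((worm B).imp (Formula.dia α (worm A)))

def Le {L : Type} [LinearOrder L] (α : L) (A B : List L) : Prop :=
  Lt α A B ∨ A = B

/-- Join a list of blocks, separating consecutive blocks by the modality `α`. -/
def joinSep {L : Type} (α : L) : List (List L) → List L
  | [] => []
  | [p] => p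
  | p :: ps => p ++ α :: joinSep α ps

/-- Worm normal form. -/
inductive WNF {L : Type} [LinearOrder L] [SuccOrder L] : List L → Prop where
  | nil : WNF []
  | node (α : L) (parts : List (List L))
      (hlen : 2 ≤ parts.length)
      (hmods : ∀ p ∈ parts, ∀ β ∈ p, α < β)
      (hwnf : ∀ p ∈ parts, WNF p)
      (hord : parts.Chain' (Le (Order.succ α)))
      : WNF (joinSep α parts)

/-!
A worm in normal form is `A₁ γ A₂ γ ⋯ γ Aₙ` with blocks `Aᵢ > γ` increasing for `≤_{γ+1}`. Two
such worms are compared at the smaller of their separators (the other worm being a single block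
there), lexicographically from their rightmost, largest, blocks; the blocks themselves are
comparable by induction. At the first difference `r <_{γ+1} t`, the blocks in front of `t` can be
dropped, since a worm implies `⟨γ⟩` of each of its `γ`-suffixes; `t` followed by the common tail
proves `⟨γ+1⟩` of `r` followed by it; and the blocks in front of `r` are glued back one at a time:
they are `≤_{γ+1} r`, and `⟨γ⟩φ → [γ+1]⟨γ⟩φ` carries the `⟨γ⟩`-tail inside `⟨γ+1⟩`.
-/

section JoinSep

variable {L : Type}

theorem joinSep_cons_of_ne_nil (β : L) (p : List L) {ps : List (List L)} (h : ps ≠ []) :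
    joinSep β (p :: ps) = p ++ β :: joinSep β ps := by
  obtain ⟨q, qs, rfl⟩ := List.exists_cons_of_ne_nil h
  rfl

theorem prefix_joinSep_cons (β : L) (p : List L) : ∀ ps : List (List L), p <+: joinSep β (p :: ps)
  | [] => List.prefix_refl p
  | _ :: _ => List.prefix_append p _

theorem sep_mem_joinSep {β : L} : ∀ {Zs : List (List L)}, 2 ≤ Zs.length → β ∈ joinSep β Zs
  | _ :: _ :: _, _ => List.mem_append_right _ List.mem_cons_self

theorem le_of_mem_joinSep [Preorder L] {β x : L} :
    ∀ {Zs : List (List L)}, (∀ p ∈ Zs, ∀ y ∈ p, β ≤ y) → x ∈ joinSep β Zs → β ≤ x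
  | [p], hZ, hx => hZ p (by simp) x hx
  | p :: q :: qs, hZ, hx => by
    rcases List.mem_append.mp hx with hx | hx
    · exact hZ p (by simp) x hx
    · rcases List.mem_cons.mp hx with rfl | hx
      · exact le_rfl
      · exact le_of_mem_joinSep (fun r hr => hZ r (by simp [hr])) hx

end JoinSep

namespace GLP

variable {L : Type} [LinearOrder L] {φ ψ χ θ : Formula L}

theorem imp_self (φ : Formula L) : GLP (φ.imp φ) :=
  mp _ _ (mp _ _ (k2 φ (φ.imp φ) φ) (k1 φ (φ.imp φ))) (k1 φ φ)

/-- Derivability from hypotheses. Necessitation does not apply to hypotheses, which is what makes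
the deduction theorem hold. -/
inductive Entails (Γ : List (Formula L)) : Formula L → Prop
  | ax {φ : Formula L} : GLP φ → Entails Γ φ
  | hyp {φ : Formula L} : φ ∈ Γ → Entails Γ φ
  | mp {φ ψ : Formula L} : Entails Γ (φ.imp ψ) → Entails Γ φ → Entails Γ ψ

theorem Entails.deduction {Γ : List (Formula L)} (h : Entails (ψ :: Γ) φ) :
    Entails Γ (ψ.imp φ) := by
  induction h with
  | ax h => exact .mp (.ax (k1 _ _)) (.ax h)
  | hyp h =>
    rcases List.mem_cons.mp h with rfl | h
    · exact .ax (imp_self _)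
    · exact .mp (.ax (k1 _ _)) (.hyp h)
  | mp _ _ ih₁ ih₂ => exact .mp (.mp (.ax (k2 _ _ _)) ih₁) ih₂

theorem Entails.absurd {Γ : List (Formula L)} (h₁ : Entails Γ φ.neg) (h₂ : Entails Γ φ) :
    Entails Γ bot :=
  .mp h₁ h₂

theorem of_entails_nil (h : Entails [] φ) : GLP φ := by
  induction h with
  | ax h => exact h
  | hyp h => cases h
  | mp _ _ ih₁ ih₂ => exact mp _ _ ih₁ ih₂

theorem imp_trans (h₁ : GLP (φ.imp ψ)) (h₂ : GLP (ψ.imp χ)) : GLP (φ.imp χ) :=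
  of_entails_nil <| .deduction <| .mp (.ax h₂) (.mp (.ax h₁) (.hyp (by simp)))

theorem imp_of_imp_of_imp (h₁ : GLP (χ.imp φ)) (h₂ : GLP (χ.imp ψ))
    (h : GLP (φ.imp (ψ.imp θ))) : GLP (χ.imp θ) :=
  of_entails_nil <| .deduction <|
    .mp (.mp (.ax h) (.mp (.ax h₁) (.hyp (by simp)))) (.mp (.ax h₂) (.hyp (by simp)))

theorem imp_top (φ : Formula L) : GLP (φ.imp top) :=
  mp _ _ (k1 _ _) (imp_self bot)

theorem imp_neg_neg (φ : Formula L) : GLP (φ.imp φ.neg.neg) :=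
  of_entails_nil <| .deduction <| .deduction <| .absurd (φ := φ) (.hyp (by simp)) (.hyp (by simp))

theorem contrapose (h : GLP (φ.imp ψ)) : GLP (ψ.neg.imp φ.neg) :=
  of_entails_nil <| .deduction <| .deduction <|
    .absurd (.hyp (by simp)) (.mp (.ax h) (.hyp (by simp)))

theorem box_imp_box (a : L) (h : GLP (φ.imp ψ)) : GLP ((box a φ).imp (box a ψ)) :=
  mp _ _ (dist a φ ψ) (nec a _ h)

theorem dia_imp_dia (a : L) (h : GLP (φ.imp ψ)) : GLP ((dia a φ).imp (dia a ψ)) :=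
  contrapose (box_imp_box a (contrapose h))

theorem dia_imp_dia_of_le {a c : L} (hac : a ≤ c) (φ : Formula L) :
    GLP ((dia c φ).imp (dia a φ)) :=
  contrapose (GLP.mono a c φ.neg hac)

theorem dia_dia_imp_dia {a c : L} (hac : a ≤ c) (φ : Formula L) :
    GLP ((dia c (dia a φ)).imp (dia a φ)) :=
  contrapose (imp_trans (GLP.trans a c φ.neg hac) (box_imp_box c (imp_neg_neg _)))

theorem dia_imp_box_imp_dia (c : L) (h : GLP (φ.imp (ψ.imp χ))) :
    GLP ((dia c φ).imp ((box c ψ).imp (dia c χ))) := by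
  have hcontra : GLP (ψ.imp (χ.neg.imp φ.neg)) :=
    of_entails_nil <| .deduction <| .deduction <| .deduction <|
      .absurd (.hyp (by simp)) (.mp (.mp (.ax h) (.hyp (by simp))) (.hyp (by simp)))
  have hbox : GLP ((box c ψ).imp ((box c χ.neg).imp (box c φ.neg))) :=
    imp_trans (box_imp_box c hcontra) (dist c _ _)
  exact of_entails_nil <| .deduction <| .deduction <| .deduction <|
    .absurd (φ := box c φ.neg) (.hyp (by simp [dia]))
      (.mp (.mp (.ax hbox) (.hyp (by simp))) (.hyp (by simp)))

end GLP

open GLP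

section Worms

variable {L : Type} [LinearOrder L]

theorem worm_imp_worm_of_prefix {A B : List L} (h : A <+: B) : GLP ((worm B).imp (worm A)) := by
  obtain ⟨E, rfl⟩ := h
  induction A with
  | nil => exact imp_top _
  | cons a A ih => exact dia_imp_dia a ih

theorem worm_imp_dia_imp_worm_append {β : L} {p : List L} (hp : ∀ x ∈ p, β < x) (R : List L) :
    GLP ((worm p).imp ((dia β (worm R)).imp (worm (p ++ β :: R)))) := by
  induction p with
  | nil => exact mp _ _ (k1 _ _) (imp_self _)
  | cons c p ih =>
    have hc : β < c := hp c (by simp)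
    have step := dia_imp_box_imp_dia c (ih fun x hx => hp x (by simp [hx]))
    exact of_entails_nil <| .deduction <| .deduction <|
      .mp (.mp (.ax step) (.hyp (by simp [worm]))) (.mp (.ax (negintro β c _ hc)) (.hyp (by simp)))

theorem Lt.trans {b : L} {X Y Z : List L} (h₁ : Lt b X Y) (h₂ : Lt b Y Z) : Lt b X Z :=
  imp_trans h₂ (imp_trans (dia_imp_dia b h₁) (dia_dia_imp_dia le_rfl _))

theorem Lt.trans_le {b : L} {X Y Z : List L} (h₁ : Lt b X Y) : Le b Y Z → Lt b X Z
  | .inl h₂ => h₁.trans h₂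
  | .inr rfl => h₁

theorem Le.trans_lt {b : L} {X Y Z : List L} : Le b X Y → Lt b Y Z → Lt b X Z
  | .inl h₁ => h₁.trans
  | .inr rfl => id

theorem Le.trans {b : L} {X Y Z : List L} (h₁ : Le b X Y) : Le b Y Z → Le b X Z
  | .inl h₂ => .inl (h₁.trans_lt h₂)
  | .inr rfl => h₁

instance (b : L) : Trans (Le b) (Le b) (Le b) := ⟨Le.trans⟩

theorem Lt.mono {a b : L} (hab : a ≤ b) {X Y : List L} (h : Lt b X Y) : Lt a X Y :=
  imp_trans h (dia_imp_dia_of_le hab _)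

theorem Le.mono {a b : L} (hab : a ≤ b) {X Y : List L} : Le b X Y → Le a X Y :=
  Or.imp_left (Lt.mono hab)

theorem Lt.of_prefix {b : L} {X Y r : List L} (h : Lt b X Y) (hr : r <+: X) : Lt b r Y :=
  imp_trans h (dia_imp_dia b (worm_imp_worm_of_prefix hr))

theorem Le.dia_imp_dia {α : L} {A B : List L} :
    Le α A B → GLP ((dia α (worm B)).imp (dia α (worm A)))
  | .inl h => imp_trans (GLP.dia_imp_dia α h) (dia_dia_imp_dia le_rfl _)
  | .inr rfl => imp_self _

theorem nil_le {α : L} : ∀ {B : List L}, (∀ x ∈ B, α ≤ x) → Le α [] B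
  | [], _ => .inr rfl
  | x :: _, h => .inl (imp_trans (dia_imp_dia x (imp_top _)) (dia_imp_dia_of_le (h x (by simp)) _))

theorem lt_append_cons {β : L} {C : List L} (hC : ∀ x ∈ C, β ≤ x) (X : List L) :
    Lt β X (C ++ β :: X) := by
  induction C with
  | nil => exact imp_self _
  | cons c C ih =>
    exact imp_trans (dia_imp_dia c (ih fun x hx => hC x (by simp [hx])))
      (dia_dia_imp_dia (hC c (by simp)) _)

theorem lt_append_cons_of_lt {β b : L} (hβb : β < b) {p : List L} (hp : ∀ x ∈ p, β < x)
    {R Y : List L} (hpY : Lt b p Y) (hRY : Lt β R Y) : Lt b (p ++ β :: R) Y :=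
  imp_of_imp_of_imp hpY (imp_trans hRY (negintro β b _ hβb))
    (dia_imp_box_imp_dia b (worm_imp_dia_imp_worm_append hp R))

theorem Lt.append_cons {β b : L} (hβb : β < b) {r t : List L} (hr : ∀ x ∈ r, β < x)
    (ht : ∀ x ∈ t, β ≤ x) (h : Lt b r t) (X : List L) : Lt b (r ++ β :: X) (t ++ β :: X) :=
  lt_append_cons_of_lt hβb hr (imp_trans (worm_imp_worm_of_prefix (List.prefix_append t _)) h)
    (lt_append_cons ht X)

theorem le_joinSep_append {β : L} {S : List (List L)} :
    ∀ {Qs : List (List L)}, (∀ q ∈ Qs, ∀ x ∈ q, β ≤ x) → Le β (joinSep β S) (joinSep β (Qs ++ S))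
  | [], _ => .inr rfl
  | q :: Qs, hQ => by
    have hq : ∀ x ∈ q, β ≤ x := hQ q (by simp)
    rcases eq_or_ne (Qs ++ S) [] with hQS | hQS
    · obtain ⟨rfl, rfl⟩ := List.append_eq_nil_iff.mp hQS
      exact nil_le hq
    · rw [List.cons_append, joinSep_cons_of_ne_nil β q hQS]
      exact (le_joinSep_append fun p hp => hQ p (by simp [hp])).trans (.inl (lt_append_cons hq _))

end Worms

section Comparison

variable {L : Type} [LinearOrder L]

theorem Lt.joinSep_cons {β b : L} (hβb : β < b) {r t : List L} (hr : ∀ x ∈ r, β < x)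
    (ht : ∀ x ∈ t, β ≤ x) (h : Lt b r t) :
    ∀ S : List (List L), Lt b (joinSep β (r :: S)) (joinSep β (t :: S))
  | [] => h
  | s :: S => h.append_cons hβb hr ht (joinSep β (s :: S))

theorem lt_joinSep_append_cons {β b : L} (hβb : β < b) {r Y : List L} {S : List (List L)}
    (hrY : Lt b (joinSep β (r :: S)) Y) :
    ∀ {Ps : List (List L)}, (∀ p ∈ Ps, ∀ x ∈ p, β < x) → (∀ p ∈ Ps, Le b p r) →
      Lt β (joinSep β (Ps ++ r :: S)) Y
  | [], _, _ => hrY.mono hβb.le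
  | p :: Ps, hP, hPr => by
    rw [List.cons_append, joinSep_cons_of_ne_nil β p (by simp)]
    have hpY : Lt b p Y := (hPr p (by simp)).trans_lt (hrY.of_prefix (prefix_joinSep_cons β r S))
    have hRY := lt_joinSep_append_cons hβb hrY (Ps := Ps) (fun q hq => hP q (by simp [hq]))
      (fun q hq => hPr q (by simp [hq]))
    exact (lt_append_cons_of_lt hβb (hP p (by simp)) hpY hRY).mono hβb.le

theorem joinSep_lt_of_lt {β b : L} (hβb : β < b) {r t : List L} {Ps Qs S : List (List L)}
    (hPrS : ∀ p ∈ Ps ++ r :: S, ∀ x ∈ p, β < x) (hsorted : (Ps ++ r :: S).Pairwise (Le b))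
    (hQtS : ∀ q ∈ Qs ++ t :: S, ∀ x ∈ q, β < x) (h : Lt b r t) :
    Lt β (joinSep β (Ps ++ r :: S)) (joinSep β (Qs ++ t :: S)) := by
  have hrt : Lt b (joinSep β (r :: S)) (joinSep β (t :: S)) :=
    h.joinSep_cons hβb (hPrS r (by simp)) (fun x hx => (hQtS t (by simp) x hx).le) S
  have hPr : ∀ p ∈ Ps, Le b p r := fun p hp =>
    (List.pairwise_append.mp hsorted).2.2 p hp r List.mem_cons_self
  exact (lt_joinSep_append_cons hβb hrt (fun p hp => hPrS p (by simp [hp])) hPr).trans_le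
    (le_joinSep_append fun q hq x hx => (hQtS q (by simp [hq]) x hx).le)

variable [SuccOrder L]

/-- Worms are compared lexicographically starting from their rightmost (largest) blocks: `Xs` and
`Ys` list, from right to left, the blocks in front of a common suffix `S`. -/
theorem joinSep_reverse_append_le_total {β : L} : ∀ (Xs Ys S : List (List L)),
    (∀ p ∈ Xs.reverse ++ S, ∀ x ∈ p, β < x) → (∀ p ∈ Ys.reverse ++ S, ∀ x ∈ p, β < x) →
    (Xs.reverse ++ S).Pairwise (Le (Order.succ β)) →
    (Ys.reverse ++ S).Pairwise (Le (Order.succ β)) →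
    (∀ r ∈ Xs, ∀ t ∈ Ys, Le (Order.succ β) r t ∨ Le (Order.succ β) t r) →
    Le β (joinSep β (Xs.reverse ++ S)) (joinSep β (Ys.reverse ++ S)) ∨
      Le β (joinSep β (Ys.reverse ++ S)) (joinSep β (Xs.reverse ++ S))
  | [], Ys, S, _, hY, _, _, _ =>
    .inl (le_joinSep_append fun q hq x hx => (hY q (List.mem_append_left _ hq) x hx).le)
  | Xs, [], S, hX, _, _, _, _ =>
    .inr (le_joinSep_append fun p hp x hx => (hX p (List.mem_append_left _ hp) x hx).le)
  | r :: Xs, t :: Ys, S, hX, hY, hXs, hYs, hcmp => by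
    simp only [List.reverse_cons, List.append_assoc, List.singleton_append] at hX hY hXs hYs ⊢
    by_cases hrt : r = t
    · subst hrt
      exact joinSep_reverse_append_le_total Xs Ys (r :: S) hX hY hXs hYs
        fun r' hr' t' ht' => hcmp r' (by simp [hr']) t' (by simp [ht'])
    have hβ : β < Order.succ β := Order.lt_succ_iff_not_isMax.mpr fun hmax => hrt <| by
      rw [List.eq_nil_iff_forall_not_mem.mpr fun x hx => hmax.not_lt (hX r (by simp) x hx),
        List.eq_nil_iff_forall_not_mem.mpr fun x hx => hmax.not_lt (hY t (by simp) x hx)]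
    rcases hcmp r (by simp) t (by simp) with (h | h) | (h | h)
    · exact .inl (.inl (joinSep_lt_of_lt hβ hX hXs hY h))
    · exact absurd h hrt
    · exact .inr (.inl (joinSep_lt_of_lt hβ hY hYs hX h))
    · exact absurd h.symm hrt

theorem joinSep_le_total {α β : L} (hαβ : α ≤ β) {Ps Qs : List (List L)}
    (hP : ∀ p ∈ Ps, ∀ x ∈ p, β < x) (hQ : ∀ q ∈ Qs, ∀ x ∈ q, β < x)
    (hPs : Ps.IsChain (Le (Order.succ β))) (hQs : Qs.IsChain (Le (Order.succ β)))
    (hcmp : ∀ p ∈ Ps, ∀ q ∈ Qs, Le (Order.succ β) p q ∨ Le (Order.succ β) q p) :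
    Le α (joinSep β Ps) (joinSep β Qs) ∨ Le α (joinSep β Qs) (joinSep β Ps) := by
  have h := joinSep_reverse_append_le_total Ps.reverse Qs.reverse []
    (by simpa using hP) (by simpa using hQ)
    (by simpa using List.isChain_iff_pairwise.mp hPs)
    (by simpa using List.isChain_iff_pairwise.mp hQs)
    (by simpa using hcmp)
  simp only [List.reverse_reverse, List.append_nil] at h
  exact h.imp (Le.mono hαβ) (Le.mono hαβ)

theorem WNF.le_total {A B : List L} (hA : WNF A) (hB : WNF B) :
    ∀ {α : L}, (∀ x ∈ A, α ≤ x) → (∀ x ∈ B, α ≤ x) → Le α A B ∨ Le α B A := by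
  have hsucc {ε : L} {p : List L} (h : ∀ x ∈ p, ε < x) : ∀ x ∈ p, Order.succ ε ≤ x :=
    fun x hx => Order.succ_le_of_lt (h x hx)
  induction hA generalizing B with
  | nil => exact fun _ _ hBα => .inl (nil_le hBα)
  | node γ Ps hlen hP hwnf hPs ih =>
    induction hB with
    | nil => exact fun hA _ => .inr (nil_le hA)
    | node δ Qs hlen' hQ hwnf' hQs ih' =>
      intro α hAα hBα
      rcases lt_trichotomy γ δ with hγδ | rfl | hδγ
      · have hB : ∀ x ∈ joinSep δ Qs, γ < x := fun x hx => hγδ.trans_le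
          (le_of_mem_joinSep (fun q hq y hy => (hQ q hq y hy).le) hx)
        exact joinSep_le_total (Qs := [joinSep δ Qs]) (hAα γ (sep_mem_joinSep hlen)) hP
          (by simpa using hB) hPs (List.isChain_singleton _)
          (by simpa using fun p hp =>
            ih p hp (WNF.node δ Qs hlen' hQ hwnf' hQs) (hsucc (hP p hp)) (hsucc hB))
      · exact joinSep_le_total (hAα γ (sep_mem_joinSep hlen)) hP hQ hPs hQs
          fun p hp q hq => ih p hp (hwnf' q hq) (hsucc (hP p hp)) (hsucc (hQ q hq))
      · have hA : ∀ x ∈ joinSep γ Ps, δ < x := fun x hx => hδγ.trans_le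
          (le_of_mem_joinSep (fun p hp y hy => (hP p hp y hy).le) hx)
        exact joinSep_le_total (Ps := [joinSep γ Ps]) (hBα δ (sep_mem_joinSep hlen'))
          (by simpa using hA) hQ (List.isChain_singleton _) hQs
          (by simpa using fun q hq => ih' q hq (hsucc hA) (hsucc (hQ q hq)))

end Comparison

/-- For `A, B ∈ 𝕎°_α`, either `GLP ⊢ ⟨α⟩A → ⟨α⟩B` or `GLP ⊢ ⟨α⟩B → ⟨α⟩A`. -/
theorem dia_comparable {L : Type} [LinearOrder L] [SuccOrder L] (α : L)
    (A B : List L)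
    (hAm : ∀ β ∈ A, α ≤ β) (hBm : ∀ β ∈ B, α ≤ β)
    (hA : WNF A) (hB : WNF B) :
    GLP ((Formula.dia α (worm A)).imp (Formula.dia α (worm B))) ∨
      GLP ((Formula.dia α (worm B)).imp (Formula.dia α (worm A))) :=
  (WNF.le_total hA hB hAm hBm).symm.imp Le.dia_imp_dia Le.dia_imp_dia
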